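/- Let 𝒪 be the star-subalgebra of B(H) generated by A, B, D and the identity. For x ∈ 𝒪, the following are equivalent: (1) for all (i,j,k), (i′,j′,k′) ∈ ℕ×ℤ×ℤ with d(i′,j′,k′) ≠ d(i,j,k), one has ⟨e_{i′,j′,k′}, x e_{i,j,k}⟩ = 0 (i.e., x commutes with the diagonal operator T : e_{i,j,k} ↦ d(i,j,k)·e_{i,j,k} and with T*, so x lies in the kernel of the derivation [𝒟, ·]); (2) x belongs to the linear span of the operators (B B*)^{m} for m ∈ ℕ (note B B* e_{i,j,k} = |q|^{2i} e_{i,j,k}). -/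

import Mathlib

open scoped InnerProductSpace
noncomputable section

/-- The Hilbert space `H = ℓ²(ℕ × ℤ × ℤ)`. -/
abbrev UqH : Type := lp (fun _ : ℕ × ℤ × ℤ => ℂ) 2

/-- The standard orthonormal basis vectors `e_{i,j,k}` of `H`. -/
def e (i : ℕ) (j k : ℤ) : UqH := lp.single 2 (i, j, k) 1

/-- The eigenvalue function `d(i,j,k) = ±i + j + √−1·k` (sign `+` if `j ≥ 0`, `−` if `j < 0`)
of the diagonal operator `T`. -/
def dEig (i : ℕ) (j k : ℤ) : ℂ :=
  if 0 ≤ j then (i : ℂ) + (j : ℂ) + Complex.I * (k : ℂ)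
  else -(i : ℂ) + (j : ℂ) + Complex.I * (k : ℂ)

/-!
Every word in `A, B, D` and their adjoints is a weighted shift
`e_{i,j,k} ↦ φ(j) w(i) e_{i+a, j+b, k+c}` with phase `φ(j) = exp(-2π√-1 θ c j)`: the square
roots coming from `A` and `A*` telescope into `G(i+a)/G(i)` with `G(n) = ∏_{m=1}^{n} √(1 - |q|^{2m})`,
up to a polynomial in `|q|^{2i}`. Hence for `x ∈ 𝒪` the entries
`⟨e_{i',j+b,k}, x e_{i,j,k}⟩` do not depend on `j`, and the diagonal entries are `P(|q|^{2i})`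
for one polynomial `P`. An off-diagonal entry with `k' = k` can be slid along `j` to a position
where `d` takes different values on the two indices, so the kernel condition kills all
off-diagonal entries and `x = P(B B*)`.
-/

namespace DiracKernel

open Polynomial ComplexConjugate

lemma inner_e_left (i' : ℕ) (j' k' : ℤ) (v : UqH) : ⟪e i' j' k', v⟫_ℂ = v (i', j', k') := by
  simp [e, lp.inner_single_left]

lemma inner_e_e (i' : ℕ) (j' k' : ℤ) (i : ℕ) (j k : ℤ) :
    ⟪e i' j' k', e i j k⟫_ℂ = if (i', j', k') = (i, j, k) then 1 else 0 := by
  rw [inner_e_left, e, lp.single_apply, Pi.single_apply]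

lemma ext_e {x y : UqH →L[ℂ] UqH} (h : ∀ i j k, x (e i j k) = y (e i j k)) : x = y :=
  lp.ext_continuousLinearMap ENNReal.ofNat_ne_top fun ⟨i, j, k⟩ =>
    ContinuousLinearMap.ext_ring (by simpa [e, lp.singleContinuousLinearMap_apply] using h i j k)

lemma dEig_re (i : ℕ) (j k : ℤ) :
    (dEig i j k).re = ((if 0 ≤ j then (i : ℤ) + j else -(i : ℤ) + j : ℤ) : ℝ) := by
  unfold dEig; split_ifs <;> simp

lemma dEig_im (i : ℕ) (j k : ℤ) : (dEig i j k).im = k := by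
  unfold dEig; split_ifs <;> simp

lemma exists_dEig_ne {i i' : ℕ} {b : ℤ} (h : i' ≠ i ∨ b ≠ 0) (k : ℤ) :
    ∃ j : ℤ, dEig i' (j + b) k ≠ dEig i j k := by
  -- far to the left the signs are `-`, far to the right they are `+`
  refine (em ((i' : ℤ) + b = i)).elim (fun hb => ⟨min (-1) (-b - 1), ?_⟩)
    fun hb => ⟨max 0 (-b), ?_⟩ <;>
  · intro hd
    have := congrArg Complex.re hd
    rw [dEig_re, dEig_re, Int.cast_inj] at this
    split_ifs at this <;> omega

lemma pow_toNat_add {G₀ : Type*} [CommGroupWithZero G₀] {z : G₀} (hz : z ≠ 0) {i : ℕ} {a : ℤ}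
    (h : 0 ≤ (i : ℤ) + a) : z ^ ((i : ℤ) + a).toNat = z ^ a * z ^ i := by
  rw [← zpow_natCast, Int.toNat_of_nonneg h, zpow_add₀ hz, zpow_natCast, mul_comm]

lemma eval_comp_C_mul_X_pow {K : Type*} [Field K] {w : K} (hw : w ≠ 0) (P : K[X]) {i : ℕ} {a : ℤ}
    (h : 0 ≤ (i : ℤ) + a) :
    (P.comp (C (w ^ a) * X)).eval (w ^ i) = P.eval (w ^ ((i : ℤ) + a).toNat) := by
  rw [eval_comp, eval_mul, eval_C, eval_X, pow_toNat_add hw h]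

/-- The weights of `A` are the successive quotients of this product. -/
def sqrtQFactorial (q : ℂ) (n : ℕ) : ℝ := ∏ m ∈ Finset.range n, √(1 - ‖q‖ ^ (2 * (m + 1)))

lemma sqrtQFactorial_pos {q : ℂ} (hq : ‖q‖ < 1) (n : ℕ) : 0 < sqrtQFactorial q n :=
  Finset.prod_pos fun _ _ => Real.sqrt_pos.2 (sub_pos.2 (pow_lt_one₀ (norm_nonneg q) hq (by omega)))

lemma sqrtQFactorial_succ (q : ℂ) (n : ℕ) :
    sqrtQFactorial q (n + 1) = sqrtQFactorial q n * √(1 - ‖q‖ ^ (2 * (n + 1))) :=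
  Finset.prod_range_succ _ _

def phase (θ : ℝ) (c j : ℤ) : ℂ := Complex.exp (-(2 * Real.pi * θ * (c * j)) * Complex.I)

lemma phase_zero_left (θ : ℝ) (j : ℤ) : phase θ 0 j = 1 := by
  simp [phase]

lemma phase_mul_phase (θ : ℝ) (b c c' j : ℤ) :
    phase θ c' j * phase θ c (j + b) = phase θ (c + c') j * phase θ c b := by
  simp only [phase, ← Complex.exp_add]
  congr 1
  push_cast
  ring

def shiftWeight (q : ℂ) (a : ℤ) (z : ℂ) (P : ℂ[X]) (i : ℕ) : ℂ :=
  z ^ i * ((sqrtQFactorial q ((i : ℤ) + a).toNat / sqrtQFactorial q i : ℝ) : ℂ) *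
    P.eval (((‖q‖ : ℂ) ^ 2) ^ i)

lemma shiftWeight_C_mul (q : ℂ) (a : ℤ) (z μ : ℂ) (P : ℂ[X]) (i : ℕ) :
    shiftWeight q a z (C μ * P) i = μ * shiftWeight q a z P i := by
  simp only [shiftWeight, eval_mul, eval_C]
  ring

lemma shiftWeight_mul {q : ℂ} (hq0 : q ≠ 0) (hq1 : ‖q‖ < 1) {a a' : ℤ} {z : ℂ} (hz : z ≠ 0) (z' : ℂ)
    (P P' : ℂ[X]) {i : ℕ} (hi : 0 ≤ (i : ℤ) + a') :
    shiftWeight q a z P ((i : ℤ) + a').toNat * shiftWeight q a' z' P' i =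
      shiftWeight q (a + a') (z * z')
        (C (z ^ a') * P.comp (C (((‖q‖ : ℂ) ^ 2) ^ a') * X) * P') i := by
  have hn : (((i : ℤ) + a').toNat : ℤ) + a = i + (a + a') := by omega
  have hG : (sqrtQFactorial q ((i : ℤ) + a').toNat : ℂ) ≠ 0 :=
    mod_cast (sqrtQFactorial_pos hq1 _).ne'
  have hq2 : ((‖q‖ : ℂ) ^ 2) ≠ 0 := by simpa using hq0
  simp only [shiftWeight, hn, eval_mul, eval_C, eval_comp_C_mul_X_pow hq2 _ hi,
    pow_toNat_add hz hi, mul_pow]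
  push_cast
  field_simp

lemma shiftWeight_eq_zero {q : ℂ} {a : ℤ} {z : ℂ} {P : ℂ[X]} {i : ℕ}
    (h : P.eval (((‖q‖ : ℂ) ^ 2) ^ i) = 0) : shiftWeight q a z P i = 0 := by
  rw [shiftWeight, h, mul_zero]

/-- The vanishing condition on `P` records that `w` kills the `e_{i,j,k}` with `i + a < 0`. -/
def IsWeightedShift (q : ℂ) (θ : ℝ) (w : UqH →L[ℂ] UqH) : Prop :=
  ∃ (a b c : ℤ) (p r : ℕ) (P : ℂ[X]), (p : ℤ) - r = b ∧
    (∀ i : ℕ, (i : ℤ) + a < 0 → P.eval (((‖q‖ : ℂ) ^ 2) ^ i) = 0) ∧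
    ∀ i j k, w (e i j k) =
      (phase θ c j * shiftWeight q a (q ^ p * conj q ^ r) P i) •
        e ((i : ℤ) + a).toNat (j + b) (k + c)

lemma isWeightedShift_one {q : ℂ} (hq1 : ‖q‖ < 1) (θ : ℝ) : IsWeightedShift q θ 1 :=
  ⟨0, 0, 0, 0, 0, 1, rfl, by omega, fun i j k => by
    simp [phase_zero_left, shiftWeight, (sqrtQFactorial_pos hq1 i).ne']⟩

lemma IsWeightedShift.mul {q : ℂ} (hq0 : q ≠ 0) (hq1 : ‖q‖ < 1) {θ : ℝ} {w w' : UqH →L[ℂ] UqH}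
    (hw : IsWeightedShift q θ w) (hw' : IsWeightedShift q θ w') : IsWeightedShift q θ (w * w') := by
  obtain ⟨a, b, c, p, r, P, hb, hP, hwe⟩ := hw
  obtain ⟨a', b', c', p', r', P', hb', hP', hwe'⟩ := hw'
  have hq2 : ((‖q‖ : ℂ) ^ 2) ≠ 0 := by simpa using hq0
  set z := q ^ p * conj q ^ r
  have hz : z ≠ 0 := by simp [z, hq0]
  refine ⟨a + a', b + b', c + c', p + p', r + r',
    C (phase θ c b') * (C (z ^ a') * P.comp (C (((‖q‖ : ℂ) ^ 2) ^ a') * X) * P'),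
    by push_cast; omega, fun i hi => ?_, fun i j k => ?_⟩
  · by_cases hi' : (i : ℤ) + a' < 0
    · simp [hP' i hi']
    · simp [eval_comp_C_mul_X_pow hq2 _ (not_lt.1 hi'), hP ((i : ℤ) + a').toNat (by omega)]
  have hzz : q ^ (p + p') * conj q ^ (r + r') = z * (q ^ p' * conj q ^ r') := by ring
  rw [mul_apply_eq_comp, hwe', map_smul, hwe, smul_smul, hzz, shiftWeight_C_mul,
    add_assoc j, add_assoc k, add_comm b', add_comm c']
  by_cases hi : 0 ≤ (i : ℤ) + a'
  · rw [show (((i : ℤ) + a').toNat + a : ℤ).toNat = ((i : ℤ) + (a + a')).toNat by omega,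
      ← shiftWeight_mul hq0 hq1 hz _ P P' hi, ← mul_assoc (phase θ (c + c') j),
      ← phase_mul_phase]
    ring_nf
  · have hP'i := hP' i (by omega)
    simp [shiftWeight_eq_zero hP'i,
      shiftWeight_eq_zero (q := q) (i := i) (P := C (z ^ a') * _ * P') (by simp [hP'i])]

lemma IsWeightedShift.of_apply_eq {q : ℂ} (hq1 : ‖q‖ < 1) {θ : ℝ} {w : UqH →L[ℂ] UqH}
    {b c : ℤ} {p r : ℕ} (hb : (p : ℤ) - r = b)
    (hw : ∀ i j k, w (e i j k) = (phase θ c j * (q ^ p * conj q ^ r) ^ i) • e i (j + b) (k + c)) :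
    IsWeightedShift q θ w :=
  ⟨0, b, c, p, r, 1, hb, by omega, fun i j k => by
    simp [hw, shiftWeight, (sqrtQFactorial_pos hq1 i).ne']⟩

section generators

variable {q : ℂ} {θ : ℝ} {w : UqH →L[ℂ] UqH}

lemma isWeightedShift_of_raising (hq1 : ‖q‖ < 1)
    (hw : ∀ (i : ℕ) (j k : ℤ),
      w (e i j k) = ((√(1 - ‖q‖ ^ (2 * (i + 1))) : ℝ) : ℂ) • e (i + 1) j k) :
    IsWeightedShift q θ w := by
  refine ⟨1, 0, 0, 0, 0, 1, rfl, by omega, fun i j k => ?_⟩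
  have hG := (sqrtQFactorial_pos hq1 i).ne'
  simp [hw, phase_zero_left, shiftWeight, show ((i : ℤ) + 1).toNat = i + 1 by omega,
    sqrtQFactorial_succ, hG]

lemma isWeightedShift_of_lowering (hq1 : ‖q‖ < 1)
    (hw : ∀ (i : ℕ) (j k : ℤ),
      w (e i j k) = ((√(1 - ‖q‖ ^ (2 * i)) : ℝ) : ℂ) • e (i - 1) j k) :
    IsWeightedShift q θ w := by
  refine ⟨-1, 0, 0, 0, 0, 1 - X, rfl, fun i hi => by simp [show i = 0 by omega], ?_⟩
  rintro (_ | i) j k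
  · simp [hw, shiftWeight]
  · have hG := (sqrtQFactorial_pos hq1 i).ne'
    -- `√y = y / √y` turns the weight into `G(i-1)/G(i) · (1 - |q|^{2i})`
    have hweight : sqrtQFactorial q i / sqrtQFactorial q (i + 1) * (1 - ‖q‖ ^ (2 * (i + 1))) =
        √(1 - ‖q‖ ^ (2 * (i + 1))) := by
      rw [sqrtQFactorial_succ, div_mul_cancel_left₀ hG, inv_mul_eq_div, Real.div_sqrt]
    have hi : ((((i + 1 : ℕ) : ℤ) + -1).toNat) = i := by omega
    rw [hw, Nat.add_sub_cancel, ← hweight]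
    simp only [shiftWeight, phase_zero_left, hi, eval_sub, eval_one, eval_X, add_zero]
    push_cast
    ring_nf

end generators

lemma IsWeightedShift.of_mem_closure {q : ℂ} (hq0 : q ≠ 0) (hq1 : ‖q‖ < 1) {θ : ℝ}
    {s : Set (UqH →L[ℂ] UqH)} (hs : ∀ w ∈ s, IsWeightedShift q θ w) {w : UqH →L[ℂ] UqH}
    (hw : w ∈ Submonoid.closure s) : IsWeightedShift q θ w := by
  induction hw using Submonoid.closure_induction with
  | mem w hw => exact hs w hw
  | one => exact isWeightedShift_one hq1 θ
  | mul _ _ _ _ hu hv => exact hu.mul hq0 hq1 hv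

def jInvariantSubmodule : Submodule ℂ (UqH →L[ℂ] UqH) where
  carrier := {x | ∀ (i i' : ℕ) (j j₀ b k : ℤ),
    ⟪e i' (j + b) k, x (e i j k)⟫_ℂ = ⟪e i' (j₀ + b) k, x (e i j₀ k)⟫_ℂ}
  add_mem' hx hy i i' j j₀ b k := by
    simp only [add_apply, inner_add_right, hx i i' j j₀ b k, hy i i' j j₀ b k]
  zero_mem' := by simp
  smul_mem' c x hx i i' j j₀ b k := by
    simp only [smul_apply, inner_smul_right, hx i i' j j₀ b k]

def polyDiagonalSubmodule (q : ℂ) : Submodule ℂ (UqH →L[ℂ] UqH) where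
  carrier := {x | ∃ P : ℂ[X], ∀ i j k, ⟪e i j k, x (e i j k)⟫_ℂ = P.eval (((‖q‖ : ℂ) ^ 2) ^ i)}
  add_mem' := by
    rintro x y ⟨P, hP⟩ ⟨Q, hQ⟩
    exact ⟨P + Q, fun i j k => by simp [hP, hQ]⟩
  zero_mem' := ⟨0, by simp⟩
  smul_mem' := by
    rintro c x ⟨P, hP⟩
    exact ⟨C c * P, fun i j k => by simp [hP]⟩

lemma IsWeightedShift.mem_jInvariantSubmodule {q : ℂ} {θ : ℝ} {w : UqH →L[ℂ] UqH}
    (hw : IsWeightedShift q θ w) : w ∈ jInvariantSubmodule := by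
  obtain ⟨a, b, c, p, r, P, -, -, hwe⟩ := hw
  intro i i' j j₀ b₀ k
  simp only [hwe, inner_smul_right, inner_e_e, Prod.mk.injEq, add_right_inj, left_eq_add]
  by_cases hc : c = 0
  · simp [hc, phase_zero_left]
  · simp [hc]

lemma IsWeightedShift.mem_polyDiagonalSubmodule {q : ℂ} (hq1 : ‖q‖ < 1) {θ : ℝ}
    {w : UqH →L[ℂ] UqH} (hw : IsWeightedShift q θ w) : w ∈ polyDiagonalSubmodule q := by
  obtain ⟨a, b, c, p, r, P, hb, hP, hwe⟩ := hw
  by_cases h0 : a = 0 ∧ b = 0 ∧ c = 0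
  · obtain ⟨rfl, rfl, rfl⟩ := h0
    obtain rfl : p = r := by omega
    refine ⟨X ^ p * P, fun i j k => ?_⟩
    rw [hwe, inner_smul_right, inner_e_e, if_pos (by simp)]
    simp [phase_zero_left, shiftWeight, (sqrtQFactorial_pos hq1 i).ne', ← mul_pow,
      Complex.mul_conj', ← pow_mul]
    exact Or.inl (by ring)
  · refine ⟨0, fun i j k => ?_⟩
    rw [hwe, inner_smul_right, inner_e_e, eval_zero]
    split_ifs with hi
    · simp only [Prod.mk.injEq, left_eq_add] at hi
      rw [shiftWeight_eq_zero (hP i (by omega)), mul_zero, zero_mul]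
    · exact mul_zero _

lemma toSubmodule_adjoin_le {q : ℂ} (hq0 : q ≠ 0) (hq1 : ‖q‖ < 1) {θ : ℝ}
    {s : Set (UqH →L[ℂ] UqH)} (hs : ∀ w ∈ s ∪ star s, IsWeightedShift q θ w) :
    Subalgebra.toSubmodule (StarAlgebra.adjoin ℂ s).toSubalgebra ≤
      jInvariantSubmodule ⊓ polyDiagonalSubmodule q := by
  rw [StarAlgebra.adjoin_eq_span, Submodule.span_le]
  intro w hw
  have hw := IsWeightedShift.of_mem_closure hq0 hq1 hs hw
  exact ⟨hw.mem_jInvariantSubmodule, hw.mem_polyDiagonalSubmodule hq1⟩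

/-- The operators commuting with `T` and `T*`, where `T e_{i,j,k} = d(i,j,k) e_{i,j,k}`. -/
def dKernelSubmodule : Submodule ℂ (UqH →L[ℂ] UqH) where
  carrier := {x | ∀ (i : ℕ) (j k : ℤ) (i' : ℕ) (j' k' : ℤ),
    dEig i' j' k' ≠ dEig i j k → ⟪e i' j' k', x (e i j k)⟫_ℂ = 0}
  add_mem' hx hy i j k i' j' k' hd := by
    rw [add_apply, inner_add_right, hx i j k i' j' k' hd, hy i j k i' j' k' hd, add_zero]
  zero_mem' := by simp
  smul_mem' c x hx i j k i' j' k' hd := by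
    rw [smul_apply, inner_smul_right, hx i j k i' j' k' hd, mul_zero]

lemma mem_dKernelSubmodule_of_apply_e {x : UqH →L[ℂ] UqH} {τ : ℕ → ℂ}
    (hx : ∀ i j k, x (e i j k) = τ i • e i j k) : x ∈ dKernelSubmodule := by
  intro i j k i' j' k' hd
  rw [hx, inner_smul_right, inner_e_e, if_neg (by rintro ⟨⟩; exact hd rfl), mul_zero]

lemma inner_e_eq_zero_of_mem_dKernelSubmodule {x : UqH →L[ℂ] UqH} (hx : x ∈ dKernelSubmodule)
    (hxj : x ∈ jInvariantSubmodule) {i i' : ℕ} {j j' k k' : ℤ} (hne : (i', j', k') ≠ (i, j, k)) :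
    ⟪e i' j' k', x (e i j k)⟫_ℂ = 0 := by
  by_cases hd : dEig i' j' k' = dEig i j k
  · -- move the entry along `j` until the two eigenvalues differ
    have hk : k' = k := by simpa [dEig_im] using congrArg Complex.im hd
    obtain ⟨j₀, hj₀⟩ := exists_dEig_ne (i := i) (i' := i') (b := j' - j) (by
      by_contra! h
      exact hne (by simp [h.1, hk, show j' = j by omega])) k
    rw [hk, show j' = j + (j' - j) by ring, hxj i i' j j₀]
    exact hx i j₀ k i' _ k hj₀
  · exact hx i j k i' j' k' hd

lemma apply_e_eq_inner_smul {v : UqH} {i : ℕ} {j k : ℤ}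
    (hv : ∀ (i' : ℕ) (j' k' : ℤ), (i', j', k') ≠ (i, j, k) → ⟪e i' j' k', v⟫_ℂ = 0) :
    v = ⟪e i j k, v⟫_ℂ • e i j k := by
  ext ⟨i', j', k'⟩
  rw [← inner_e_left, lp.coeFn_smul, Pi.smul_apply, ← inner_e_left, inner_e_e, smul_eq_mul]
  split_ifs with h
  · simp only [Prod.mk.injEq] at h
    obtain ⟨rfl, rfl, rfl⟩ := h
    rw [mul_one]
  · rw [hv i' j' k' h, mul_zero]

lemma pow_apply_e {T : UqH →L[ℂ] UqH} {τ : ℕ → ℂ} (hT : ∀ i j k, T (e i j k) = τ i • e i j k)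
    (m : ℕ) (i : ℕ) (j k : ℤ) : (T ^ m) (e i j k) = τ i ^ m • e i j k := by
  induction m with
  | zero => simp
  | succ m ih => rw [pow_succ, mul_apply_eq_comp, hT, map_smul, ih, smul_smul, pow_succ']

lemma mul_star_apply_e {q : ℂ} {B : UqH →L[ℂ] UqH}
    (hB : ∀ (i : ℕ) (j k : ℤ), B (e i j k) = (q ^ i) • e i (j + 1) k)
    (hBs : ∀ (i : ℕ) (j k : ℤ), (star B) (e i j k) = (conj q ^ i) • e i (j - 1) k)
    (i : ℕ) (j k : ℤ) : (B * star B) (e i j k) = ((‖q‖ : ℂ) ^ 2) ^ i • e i j k := by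
  rw [mul_apply_eq_comp, hBs, map_smul, hB, sub_add_cancel, smul_smul, ← mul_pow,
    mul_comm (conj q), Complex.mul_conj']

lemma aeval_mem_span_range_pow {R A : Type*} [CommSemiring R] [Semiring A] [Algebra R A]
    (a : A) (P : R[X]) : aeval a P ∈ Submodule.span R (Set.range fun m : ℕ => a ^ m) := by
  rw [aeval_eq_sum_range]
  exact Submodule.sum_mem _ fun m _ => Submodule.smul_mem _ _ (Submodule.subset_span ⟨m, rfl⟩)

lemma eq_aeval_of_apply_e {T x : UqH →L[ℂ] UqH} {τ : ℕ → ℂ} {P : ℂ[X]}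
    (hT : ∀ i j k, T (e i j k) = τ i • e i j k)
    (hx : ∀ i j k, x (e i j k) = P.eval (τ i) • e i j k) :
    x = aeval T P := by
  refine ext_e fun i j k => ?_
  simp only [hx, aeval_eq_sum_range, sum_apply, smul_apply, pow_apply_e hT, smul_smul,
    ← Finset.sum_smul, eval_eq_sum_range]

end DiracKernel

open DiracKernel Polynomial ComplexConjugate

theorem kernel_of_Dirac_derivation_general
    (q : ℂ) (hq0 : 0 < ‖q‖) (hq1 : ‖q‖ < 1)
    (θ : ℝ)
    (A B D : UqH →L[ℂ] UqH)
    (hA : ∀ (i : ℕ) (j k : ℤ),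
      A (e i j k) = ((Real.sqrt (1 - ‖q‖ ^ (2 * (i + 1))) : ℝ) : ℂ) • e (i + 1) j k)
    (hB : ∀ (i : ℕ) (j k : ℤ), B (e i j k) = (q ^ i) • e i (j + 1) k)
    (hD : ∀ (i : ℕ) (j k : ℤ),
      D (e i j k) = Complex.exp (-(2 * (Real.pi : ℂ) * (θ : ℂ) * (j : ℂ)) * Complex.I) • e i j (k + 1))
    (hAs : ∀ (i : ℕ) (j k : ℤ),
      (star A) (e i j k) = ((Real.sqrt (1 - ‖q‖ ^ (2 * i)) : ℝ) : ℂ) • e (i - 1) j k)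
    (hBs : ∀ (i : ℕ) (j k : ℤ), (star B) (e i j k) = ((starRingEnd ℂ) q ^ i) • e i (j - 1) k)
    (hDs : ∀ (i : ℕ) (j k : ℤ),
      (star D) (e i j k) = Complex.exp ((2 * (Real.pi : ℂ) * (θ : ℂ) * (j : ℂ)) * Complex.I) • e i j (k - 1))
    (x : UqH →L[ℂ] UqH) (hx : x ∈ StarAlgebra.adjoin ℂ ({A, B, D} : Set (UqH →L[ℂ] UqH))) :
    (∀ (i : ℕ) (j k : ℤ) (i' : ℕ) (j' k' : ℤ),
        dEig i' j' k' ≠ dEig i j k → ⟪e i' j' k', x (e i j k)⟫_ℂ = 0) ↔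
      x ∈ Submodule.span ℂ (Set.range fun m : ℕ => (B * star B) ^ m) := by
  have hq : q ≠ 0 := norm_pos_iff.mp hq0
  have hBB := mul_star_apply_e hB hBs
  change x ∈ dKernelSubmodule ↔ _
  refine ⟨fun hker => ?_, fun h => Submodule.span_le.2 ?_ h⟩
  · have hgen : ∀ w ∈ ({A, B, D} ∪ star {A, B, D} : Set (UqH →L[ℂ] UqH)),
        IsWeightedShift q θ w := by
      rintro w ((rfl | rfl | rfl) | hw)
      · exact isWeightedShift_of_raising hq1 hA
      · exact .of_apply_eq hq1 (c := 0) (p := 1) (r := 0) rfl fun i j k => by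
          simp [hB, phase_zero_left]
      · exact .of_apply_eq hq1 (c := 1) (p := 0) (r := 0) rfl fun i j k => by simp [hD, phase]
      rw [← star_star w]
      rcases Set.mem_star.1 hw with hw | hw | hw <;> rw [hw]
      · exact isWeightedShift_of_lowering hq1 hAs
      · exact .of_apply_eq hq1 (c := 0) (p := 0) (r := 1) rfl fun i j k => by
          simp [hBs, phase_zero_left, sub_eq_add_neg]
      · exact .of_apply_eq hq1 (c := -1) (p := 0) (r := 0) rfl fun i j k => by
          simp [hDs, phase, sub_eq_add_neg]
    obtain ⟨hxj, P, hP⟩ := toSubmodule_adjoin_le hq hq1 hgen hx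
    have hxP : x = aeval (B * star B) P := eq_aeval_of_apply_e hBB fun i j k => by
      rw [← hP i j k]
      exact apply_e_eq_inner_smul fun i' j' k' hne =>
        inner_e_eq_zero_of_mem_dKernelSubmodule hker hxj hne
    exact hxP ▸ aeval_mem_span_range_pow _ P
  · rintro _ ⟨m, rfl⟩
    exact mem_dKernelSubmodule_of_apply_e (pow_apply_e hBB m)

/-- for `x` in the star-algebra `𝒪` generated by `A, B, D` and `1`, the
matrix of `x` is supported on pairs of basis vectors with equal `d`-eigenvalue (i.e. `x`
lies in the kernel of the derivation `[𝒟, ·]`) if and only if `x` is a linear combination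
of the operators `(B B*)^m`, `m ∈ ℕ`. -/
theorem kernel_of_Dirac_derivation
    (q : ℂ) (hq0 : 0 < ‖q‖) (hq1 : ‖q‖ < 1)
    (θ : ℝ) (hθ : θ = Complex.arg q / Real.pi)
    (A B D : UqH →L[ℂ] UqH)
    (hA : ∀ (i : ℕ) (j k : ℤ),
      A (e i j k) = ((Real.sqrt (1 - ‖q‖ ^ (2 * (i + 1))) : ℝ) : ℂ) • e (i + 1) j k)
    (hB : ∀ (i : ℕ) (j k : ℤ), B (e i j k) = (q ^ i) • e i (j + 1) k)
    (hD : ∀ (i : ℕ) (j k : ℤ),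
      D (e i j k) = Complex.exp (-(2 * (Real.pi : ℂ) * (θ : ℂ) * (j : ℂ)) * Complex.I) • e i j (k + 1))
    (hAs : ∀ (i : ℕ) (j k : ℤ),
      (star A) (e i j k) = ((Real.sqrt (1 - ‖q‖ ^ (2 * i)) : ℝ) : ℂ) • e (i - 1) j k)
    (hBs : ∀ (i : ℕ) (j k : ℤ), (star B) (e i j k) = ((starRingEnd ℂ) q ^ i) • e i (j - 1) k)
    (hDs : ∀ (i : ℕ) (j k : ℤ),
      (star D) (e i j k) = Complex.exp ((2 * (Real.pi : ℂ) * (θ : ℂ) * (j : ℂ)) * Complex.I) • e i j (k - 1))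
    (x : UqH →L[ℂ] UqH) (hx : x ∈ StarAlgebra.adjoin ℂ ({A, B, D} : Set (UqH →L[ℂ] UqH))) :
    (∀ (i : ℕ) (j k : ℤ) (i' : ℕ) (j' k' : ℤ),
        dEig i' j' k' ≠ dEig i j k → ⟪e i' j' k', x (e i j k)⟫_ℂ = 0) ↔
      x ∈ Submodule.span ℂ (Set.range fun m : ℕ => (B * star B) ^ m) :=
  kernel_of_Dirac_derivation_general q hq0 hq1 θ A B D hA hB hD hAs hBs hDs x hx
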